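/- Two integers have the same residue if and only if they are congruent or their sum is congruent to 2e+1: for all integers k, j, re(k) = re(j) if and only if k ≡ j (mod 2e+a) or k + j ≡ 2e+1 (mod 2e+a). -/

import Mathlib

/-- The residue function `re` of types `B`, `A^(2)`, `D^(2)`. -/
def residueFun (e a k : ℤ) : ℤ :=
  if k % (2*e+a) ≤ e then k % (2*e+a) else 2*e+1 - k % (2*e+a)

/-!
`re` is the reduction modulo `n = 2e+a` followed by the reflection `x ↦ 2e+1-x` of the part above
`e`. That reflection identifies exactly the pairs with `x + y = 2e+1`, and for residues
`0 ≤ x, y < n` this equation is the same as the congruence `x + y ≡ 2e+1 (mod n)` up to the pair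
`x = y = 0`, because `2e+1 ∈ {n-1, n}`.
-/

def foldAbove (e x : ℤ) : ℤ :=
  if x ≤ e then x else 2*e+1 - x

theorem foldAbove_eq_foldAbove_iff {e x y : ℤ} :
    foldAbove e x = foldAbove e y ↔ x = y ∨ x + y = 2*e+1 := by
  unfold foldAbove
  split_ifs <;> omega

theorem residueFun_eq_foldAbove_emod (e a k : ℤ) :
    residueFun e a k = foldAbove e (k % (2*e+a)) :=
  rfl

theorem eq_or_add_eq_iff_eq_or_add_modEq {n c x y : ℤ} (hx : 0 ≤ x) (hxn : x < n)
    (hy : 0 ≤ y) (hyn : y < n) (hc : n - 1 ≤ c) (hcn : c ≤ n) :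
    x = y ∨ x + y = c ↔ x = y ∨ x + y ≡ c [ZMOD n] := by
  refine ⟨Or.imp_right fun h => h ▸ Int.ModEq.refl _, ?_⟩
  rintro (hxy | h)
  · exact Or.inl hxy
  rcases eq_or_lt_of_le (add_nonneg hx hy) with hsum_zero | hsum_pos
  · omega
  · have hdiff : c - (x + y) = 0 :=
      Int.eq_zero_of_abs_lt_dvd (Int.modEq_iff_dvd.mp h) (abs_lt.mpr ⟨by omega, by omega⟩)
    omega

theorem residueFun_eq_iff (e a : ℤ) (he : 2 ≤ e) (ha : a = 1 ∨ a = 2) (k j : ℤ) :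
    residueFun e a k = residueFun e a j ↔
      k ≡ j [ZMOD 2*e+a] ∨ k + j ≡ 2*e+1 [ZMOD 2*e+a] := by
  have hn : 0 < 2*e+a := by omega
  have hsum : k + j ≡ k % (2*e+a) + j % (2*e+a) [ZMOD 2*e+a] :=
    (Int.mod_modEq k _).symm.add (Int.mod_modEq j _).symm
  rw [residueFun_eq_foldAbove_emod, residueFun_eq_foldAbove_emod, foldAbove_eq_foldAbove_iff,
    eq_or_add_eq_iff_eq_or_add_modEq (Int.emod_nonneg k hn.ne') (Int.emod_lt_of_pos k hn)
      (Int.emod_nonneg j hn.ne') (Int.emod_lt_of_pos j hn) (by omega) (by omega),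
    ← Int.ModEq]
  exact or_congr_right ⟨hsum.trans, hsum.symm.trans⟩
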